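/- (Inversion of the e_q-Laplace transform) Let q ∈ (0,1) and f ∈ ℓ¹(ℤ_{≥0}), and define f̂(ζ) = ∑_{m=0}^∞ f(m)/(ζ q^m; q)_∞ for ζ ∈ ℂ ∖ {q^{−m}}_{m≥0}. Then for every n ∈ ℤ_{≥0}, f(n) = −q^n (1/(2πi)) ∮ (q^{n+1}ζ; q)_∞ f̂(ζ) dζ, where the contour is a positively oriented closed curve enclosing exactly the poles ζ = q^{−m} for 0 ≤ m ≤ n and no other singularities. -/

import Mathlib

/-!
On the circle `|ζ| = R` no factor `1 - ζ q^k` vanishes, and the quotient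
`(q^{n+1}ζ; q)_∞ / (ζ q^m; q)_∞` collapses to a finite product: the polynomial
`(q^{n+1}ζ; q)_{m-n-1}` when `m > n`, whose integral vanishes, and `1 / (ζ q^m; q)_{n+1-m}` when
`m ≤ n`, whose poles `q^{-m-k}` all lie inside the circle. By partial fractions, a product of at
least two simple poles inside the contour integrates to zero, so only `m = n` survives, with
residue `-q^{-n}`. Integrating termwise is dominated convergence: the finite products are
uniformly bounded on the circle and `f` is summable.
-/

open Real Metric Finset

theorem circleIntegral_prod_inv_sub_eq_zero {ι : Type*} [DecidableEq ι] {c : ℂ} {R : ℝ}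
    {p : ι → ℂ} {s : Finset ι} (hp : Set.InjOn p s) (hs : ∀ i ∈ s, p i ∈ ball c R)
    (hcard : 2 ≤ #s) : ∮ z in C(c, R), ∏ i ∈ s, (z - p i)⁻¹ = 0 := by
  induction s using Finset.strongInduction with
  | H s ih =>
  obtain ⟨a, ha, b, hb, hab⟩ := Finset.one_lt_card.1 hcard
  have hR : 0 ≤ R := dist_nonneg.trans (mem_ball.1 (hs a ha)).le
  have hne : ∀ i ∈ s, ∀ z ∈ sphere c R, z - p i ≠ 0 := fun i hi z hz =>
    sub_ne_zero.2 fun h => (mem_ball.1 (hs i hi)).ne (h ▸ mem_sphere.1 hz)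
  have hint : ∀ x ∈ s, CircleIntegrable (fun z => ∏ i ∈ s.erase x, (z - p i)⁻¹) c R :=
    fun x _ => ContinuousOn.circleIntegrable hR <| continuousOn_finsetProd _ fun i hi =>
      (continuousOn_id.sub continuousOn_const).inv₀ (hne i (mem_of_mem_erase hi))
  have hsplit : Set.EqOn (fun z => ∏ i ∈ s, (z - p i)⁻¹)
      (fun z => (p b - p a)⁻¹ *
        ((∏ i ∈ s.erase a, (z - p i)⁻¹) - ∏ i ∈ s.erase b, (z - p i)⁻¹)) (sphere c R) := by
    intro z hz
    have hpab : p b - p a ≠ 0 := sub_ne_zero.2 (hp.ne hb ha hab.symm)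
    have hprod : ∀ x ∈ s, ∏ i ∈ s.erase x, (z - p i)⁻¹ = (z - p x) * ∏ i ∈ s, (z - p i)⁻¹ :=
      fun x hx => by rw [← mul_prod_erase s _ hx, mul_inv_cancel_left₀ (hne x hx z hz)]
    simp only
    rw [hprod a ha, hprod b hb, ← sub_mul, sub_sub_sub_cancel_left, inv_mul_cancel_left₀ hpab]
  have herase : ∀ x ∈ s, ∮ z in C(c, R), ∏ i ∈ s.erase x, (z - p i)⁻¹
      = if #s = 2 then 2 * π * Complex.I else 0 := by
    intro x hx
    split_ifs with h2
    · obtain ⟨y, hy⟩ := Finset.card_eq_one.1 (by rw [card_erase_of_mem hx, h2])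
      have hys : y ∈ s := mem_of_mem_erase (hy ▸ mem_singleton_self y)
      simp only [hy, prod_singleton]
      exact circleIntegral.integral_sub_inv_of_mem_ball (hs y hys)
    · refine ih _ (erase_ssubset hx) (hp.mono (by simp)) (fun i hi => hs i (mem_of_mem_erase hi)) ?_
      rw [card_erase_of_mem hx]; omega
  rw [circleIntegral.integral_congr hR hsplit, circleIntegral.integral_const_mul,
    circleIntegral.integral_sub (hint a ha) (hint b hb), herase a ha, herase b hb, sub_self,
    mul_zero]

theorem circleIntegral_tsum_mul {ι : Type*} [Countable ι] {c : ℂ} {R C : ℝ} (hR : 0 ≤ R)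
    {F : ι → ℂ → ℂ} (hF : ∀ i, ContinuousOn (F i) (sphere c R))
    (hC : ∀ i, ∀ z ∈ sphere c R, ‖F i z‖ ≤ C) {f : ι → ℂ} (hf : Summable fun i => ‖f i‖) :
    ∮ z in C(c, R), ∑' i, f i * F i z = ∑' i, f i * ∮ z in C(c, R), F i z := by
  have hsum : ∀ z ∈ sphere c R, HasSum (fun i => f i * F i z) (∑' i, f i * F i z) :=
    fun z hz => (hf.mul_right C |>.of_norm_bounded fun i => by
      rw [norm_mul]; exact mul_le_mul_of_nonneg_left (hC i z hz) (norm_nonneg _)).hasSum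
  refine (HasSum.tsum_eq ?_).symm
  simp only [← circleIntegral.integral_const_mul]
  refine intervalIntegral.hasSum_integral_of_dominated_convergence
    (fun i _ => ‖f i‖ * (|R| * C)) (fun i => ?_) (fun i => ?_) ?_ ?_ ?_
  · have hint : CircleIntegrable (fun z => f i * F i z) c R :=
      (continuousOn_const.mul (hF i)).circleIntegrable hR
    exact ((circleIntegrable_iff R).1 hint).def'.aestronglyMeasurable
  · refine .of_forall fun θ _ => ?_
    rw [norm_smul, deriv_circleMap, norm_mul, Complex.norm_I, mul_one, norm_circleMap_zero,
      norm_mul, mul_left_comm]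
    exact mul_le_mul_of_nonneg_left (mul_le_mul_of_nonneg_left
      (hC i _ (circleMap_mem_sphere c hR θ)) (abs_nonneg R)) (norm_nonneg _)
  · exact .of_forall fun _ _ => hf.mul_right _
  · exact intervalIntegrable_const
  · exact .of_forall fun θ _ => (hsum _ (circleMap_mem_sphere c hR θ)).const_smul _

theorem inv_prod_one_sub_mul {ι : Type*} (s : Finset ι) {w : ι → ℂ} (hw : ∀ i ∈ s, w i ≠ 0)
    (z : ℂ) : (∏ i ∈ s, (1 - z * w i))⁻¹ = (∏ i ∈ s, (-w i)⁻¹) * ∏ i ∈ s, (z - (w i)⁻¹)⁻¹ := by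
  rw [← prod_inv_distrib, ← prod_mul_distrib]
  refine prod_congr rfl fun i hi => ?_
  rw [← mul_inv]
  congr 1
  field_simp [hw i hi]
  ring

section QPochhammer

variable {q : ℂ}

theorem summable_norm_mul_pow (hq : ‖q‖ < 1) (a : ℂ) : Summable fun j : ℕ => ‖a * q ^ j‖ := by
  simpa [norm_mul, norm_pow] using (summable_geometric_of_lt_one (norm_nonneg q) hq).mul_left ‖a‖

theorem multipliable_one_sub_mul_pow (hq : ‖q‖ < 1) (a : ℂ) :
    Multipliable fun j : ℕ => 1 - a * q ^ j := by
  simpa only [sub_eq_add_neg] using multipliable_one_add_of_summable (f := fun j => -(a * q ^ j))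
    (by simpa using summable_norm_mul_pow hq a)

theorem tprod_one_sub_mul_pow_ne_zero (hq : ‖q‖ < 1) {a : ℂ} (ha : ∀ j : ℕ, a * q ^ j ≠ 1) :
    ∏' j : ℕ, (1 - a * q ^ j) ≠ 0 := by
  simpa only [sub_eq_add_neg] using tprod_one_add_ne_zero_of_summable (f := fun j => -(a * q ^ j))
    (fun j => by rw [← sub_eq_add_neg]; exact sub_ne_zero.2 (ha j).symm)
    (by simpa using summable_norm_mul_pow hq a)

theorem prod_range_mul_tprod_one_sub_mul_pow (hq : ‖q‖ < 1) (a : ℂ) (b : ℕ) :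
    (∏ k ∈ range b, (1 - a * q ^ k)) * ∏' j : ℕ, (1 - a * q ^ b * q ^ j)
      = ∏' j : ℕ, (1 - a * q ^ j) := by
  have hshift : ∀ j, 1 - a * q ^ b * q ^ j = 1 - a * q ^ (j + b) := fun j => by ring
  have hmul := multipliable_one_sub_mul_pow hq (a * q ^ b)
  simp only [hshift] at hmul ⊢
  exact Multipliable.prod_mul_tprod_nat_mul' (f := fun j => 1 - a * q ^ j) hmul

theorem norm_prod_one_sub_mul_pow_le (hq : ‖q‖ < 1) (a : ℂ) (L : ℕ) :
    ‖∏ k ∈ range L, (1 - a * q ^ k)‖ ≤ exp (‖a‖ / (1 - ‖q‖)) := by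
  have hgeom : ∑ k ∈ range L, ‖q‖ ^ k ≤ (1 - ‖q‖)⁻¹ :=
    tsum_geometric_of_lt_one (norm_nonneg q) hq ▸
      (summable_geometric_of_lt_one (norm_nonneg q) hq).sum_le_tsum _ fun k _ => by positivity
  calc ‖∏ k ∈ range L, (1 - a * q ^ k)‖
      ≤ ∏ k ∈ range L, (1 + ‖a‖ * ‖q‖ ^ k) := by
        refine (Finset.norm_prod_le _ _).trans (prod_le_prod (fun _ _ => norm_nonneg _) fun k _ => ?_)
        simpa [norm_mul, norm_pow] using norm_sub_le (1 : ℂ) (a * q ^ k)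
    _ ≤ exp (∑ k ∈ range L, ‖a‖ * ‖q‖ ^ k) := Real.prod_one_add_le_exp_sum _ fun _ => by positivity
    _ ≤ exp (‖a‖ / (1 - ‖q‖)) := by
        rw [exp_le_exp, ← mul_sum, div_eq_mul_inv]
        exact mul_le_mul_of_nonneg_left hgeom (norm_nonneg a)

variable {ζ : ℂ} {R : ℝ} {n : ℕ}

/-- `(q^{n+1} ζ; q)_∞ / (ζ q^m; q)_∞` with the common factors cancelled. -/
noncomputable def qRatio (q : ℂ) (n m : ℕ) (ζ : ℂ) : ℂ :=
  if m ≤ n then (∏ k ∈ range (n + 1 - m), (1 - ζ * q ^ m * q ^ k))⁻¹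
  else ∏ k ∈ range (m - (n + 1)), (1 - q ^ (n + 1) * ζ * q ^ k)

theorem tprod_div_tprod_eq_qRatio (hq : ‖q‖ < 1) (hζ : ∀ k : ℕ, ζ * q ^ k ≠ 1) (n m : ℕ) :
    (∏' j : ℕ, (1 - q ^ (n + 1) * ζ * q ^ j)) / ∏' j : ℕ, (1 - ζ * q ^ m * q ^ j)
      = qRatio q n m ζ := by
  have hne : ∀ a : ℕ, ∏' j : ℕ, (1 - ζ * q ^ a * q ^ j) ≠ 0 := fun a =>
    tprod_one_sub_mul_pow_ne_zero hq fun j => by rw [mul_assoc, ← pow_add]; exact hζ _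
  have hcomm : q ^ (n + 1) * ζ = ζ * q ^ (n + 1) := mul_comm _ _
  unfold qRatio
  split_ifs with hm
  · rw [← prod_range_mul_tprod_one_sub_mul_pow hq (ζ * q ^ m) (n + 1 - m), mul_assoc ζ, ← pow_add,
      Nat.add_sub_cancel' (by omega), hcomm, div_mul_cancel_right₀ (hne (n + 1))]
  · rw [← prod_range_mul_tprod_one_sub_mul_pow hq (q ^ (n + 1) * ζ) (m - (n + 1)), hcomm,
      mul_assoc ζ, ← pow_add, Nat.add_sub_cancel' (by omega), mul_div_cancel_right₀ _ (hne m)]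

theorem le_norm_mul_pow (hq : ‖q‖ ≤ 1) (hζ : ‖ζ‖ = R) {k : ℕ} (hk : k ≤ n) :
    R * ‖q‖ ^ n ≤ ‖ζ * q ^ k‖ := by
  rw [norm_mul, norm_pow, hζ]
  exact mul_le_mul_of_nonneg_left (pow_le_pow_of_le_one (norm_nonneg q) hq hk)
    (hζ ▸ norm_nonneg ζ)

theorem mul_pow_ne_one (hq : ‖q‖ ≤ 1) (hR₁ : 1 < R * ‖q‖ ^ n) (hR₂ : R * ‖q‖ ^ (n + 1) < 1)
    (hζ : ‖ζ‖ = R) (k : ℕ) : ζ * q ^ k ≠ 1 := by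
  intro h
  have hk : R * ‖q‖ ^ k = 1 := by simpa [hζ] using congrArg norm h
  have hR : 0 ≤ R := hζ ▸ norm_nonneg ζ
  rcases le_or_gt k n with hkn | hkn
  · nlinarith [pow_le_pow_of_le_one (norm_nonneg q) hq hkn]
  · nlinarith [pow_le_pow_of_le_one (norm_nonneg q) hq (show n + 1 ≤ k from hkn)]

theorem sub_one_le_norm_one_sub_mul_pow (hq : ‖q‖ ≤ 1) (hζ : ‖ζ‖ = R) {m k : ℕ}
    (hmk : m + k ≤ n) : R * ‖q‖ ^ n - 1 ≤ ‖1 - ζ * q ^ m * q ^ k‖ := by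
  calc R * ‖q‖ ^ n - 1 ≤ ‖ζ * q ^ m * q ^ k‖ - ‖(1 : ℂ)‖ := by
        rw [norm_one, mul_assoc, ← pow_add]
        linarith [le_norm_mul_pow hq hζ hmk]
    _ ≤ ‖1 - ζ * q ^ m * q ^ k‖ := norm_sub_rev (1 : ℂ) _ ▸ norm_sub_norm_le _ _

theorem continuousOn_qRatio (hq : ‖q‖ ≤ 1) (hR : 1 < R * ‖q‖ ^ n) (m : ℕ) :
    ContinuousOn (qRatio q n m) (sphere 0 R) := by
  unfold qRatio
  by_cases hm : m ≤ n
  · simp only [hm, if_true]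
    refine ContinuousOn.inv₀ (by fun_prop) fun ζ hζ => prod_ne_zero_iff.2 fun k hk => ?_
    have := sub_one_le_norm_one_sub_mul_pow hq (mem_sphere_zero_iff_norm.1 hζ)
      (n := n) (m := m) (k := k) (by simp only [mem_range] at hk; omega)
    exact norm_pos_iff.1 (by linarith)
  · simp only [hm, if_false]
    fun_prop

theorem norm_qRatio_le (hq : ‖q‖ < 1) (hR : 1 < R * ‖q‖ ^ n) (hζ : ‖ζ‖ = R) (m : ℕ) :
    ‖qRatio q n m ζ‖ ≤
      max (max 1 (R * ‖q‖ ^ n - 1)⁻¹ ^ (n + 1)) (exp (‖q‖ ^ (n + 1) * R / (1 - ‖q‖))) := by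
  by_cases hm : m ≤ n
  · simp only [qRatio, hm, if_true]
    refine le_max_of_le_left ?_
    rw [norm_inv, norm_prod, ← prod_inv_distrib]
    calc ∏ k ∈ range (n + 1 - m), ‖1 - ζ * q ^ m * q ^ k‖⁻¹
        ≤ ∏ _k ∈ range (n + 1 - m), max 1 (R * ‖q‖ ^ n - 1)⁻¹ := by
          refine prod_le_prod (fun _ _ => by positivity) fun k hk => le_max_of_le_right ?_
          exact inv_anti₀ (by linarith) (sub_one_le_norm_one_sub_mul_pow hq.le hζ
            (by simp only [mem_range] at hk; omega))
      _ ≤ max 1 (R * ‖q‖ ^ n - 1)⁻¹ ^ (n + 1) := by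
          rw [prod_const, card_range]
          exact pow_le_pow_right₀ (le_max_left _ _) (by omega)
  · simp only [qRatio, hm, if_false]
    refine le_max_of_le_right ?_
    simpa [norm_mul, norm_pow, hζ] using norm_prod_one_sub_mul_pow_le hq (q ^ (n + 1) * ζ) _

theorem circleIntegral_qRatio (hq0 : q ≠ 0) (hq : ‖q‖ < 1) (hR : 1 < R * ‖q‖ ^ n) (m : ℕ) :
    ∮ ζ in C(0, R), qRatio q n m ζ = if m = n then -(2 * π * Complex.I) / q ^ n else 0 := by
  have hR0 : 0 < R := by nlinarith [pow_nonneg (norm_nonneg q) n]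
  rcases lt_or_ge n m with hm | hm
  · have hdiff : Differentiable ℂ (qRatio q n m) := by
      unfold qRatio
      simp only [not_le.2 hm, if_false]
      fun_prop
    rw [if_neg hm.ne', hdiff.diffContOnCl.circleIntegral_eq_zero hR0.le]
  have hw : ∀ k ∈ range (n + 1 - m), q ^ m * q ^ k ≠ 0 := fun _ _ => by simp [hq0]
  have hball : ∀ k ∈ range (n + 1 - m), (q ^ m * q ^ k)⁻¹ ∈ ball (0 : ℂ) R := by
    intro k hk
    rw [mem_ball_zero_iff, norm_inv, norm_mul, norm_pow, norm_pow, ← pow_add,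
      inv_lt_iff_one_lt_mul₀ (pow_pos (norm_pos_iff.2 hq0) _)]
    refine hR.trans_le (mul_le_mul_of_nonneg_left ?_ hR0.le)
    exact pow_le_pow_of_le_one (norm_nonneg q) hq.le (by simp only [mem_range] at hk; omega)
  have hinj : Set.InjOn (fun k => (q ^ m * q ^ k)⁻¹) (range (n + 1 - m)) := by
    intro k _ l _ h
    have hpow : q ^ k = q ^ l := mul_left_cancel₀ (pow_ne_zero m hq0) (inv_injective h)
    exact pow_right_injective₀ (norm_pos_iff.2 hq0) hq.ne (by simpa using congrArg norm hpow)
  have hfun : qRatio q n m = fun ζ => (∏ k ∈ range (n + 1 - m), (-(q ^ m * q ^ k))⁻¹) *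
      ∏ k ∈ range (n + 1 - m), (ζ - (q ^ m * q ^ k)⁻¹)⁻¹ := by
    funext ζ
    simp only [qRatio, hm, if_true, mul_assoc]
    exact inv_prod_one_sub_mul _ hw ζ
  rw [hfun, circleIntegral.integral_const_mul]
  rcases hm.eq_or_lt with rfl | hlt
  · have hpole := hball 0 (by simp)
    simp only [Nat.add_sub_cancel_left, prod_range_one, pow_zero, mul_one] at hpole ⊢
    rw [if_true, circleIntegral.integral_sub_inv_of_mem_ball hpole, inv_neg]
    ring
  · rw [if_neg hlt.ne, circleIntegral_prod_inv_sub_eq_zero hinj hball (by simp; omega), mul_zero]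

end QPochhammer

/-- Inversion of the `e_q`-Laplace transform: the contour is the circle of radius `R`
centered at `0`, with `q^{-n} < R < q^{-(n+1)}`, so that it encloses exactly the
singularities `ζ = q^{-m}` for `0 ≤ m ≤ n` of the integrand and no others. -/
theorem stmt18 (q : ℝ) (hq : q ∈ Set.Ioo (0:ℝ) 1)
    (f : ℕ → ℂ) (hf : Summable fun m => ‖f m‖)
    (n : ℕ) (R : ℝ) (hR1 : q ^ (-(n : ℤ)) < R) (hR2 : R < q ^ (-(n + 1) : ℤ)) :
    f n = -(q : ℂ) ^ n * (1 / (2 * (π : ℂ) * Complex.I)) *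
      ∮ ζ in C(0, R),
        (∏' j : ℕ, (1 - (q : ℂ) ^ (n + 1) * ζ * (q : ℂ) ^ j)) *
          ∑' m : ℕ, f m / ∏' j : ℕ, (1 - ζ * (q : ℂ) ^ m * (q : ℂ) ^ j) := by
  obtain ⟨hq0, hq1⟩ := hq
  have hnorm : ‖(q : ℂ)‖ = q := by simp [abs_of_pos hq0]
  have hR₁ : 1 < R * ‖(q : ℂ)‖ ^ n := by
    rwa [hnorm, ← inv_lt_iff_one_lt_mul₀ (pow_pos hq0 n), ← zpow_natCast, ← zpow_neg]
  have hR₂ : R * ‖(q : ℂ)‖ ^ (n + 1) < 1 := by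
    rwa [hnorm, ← lt_div_iff₀ (pow_pos hq0 _), one_div, ← zpow_natCast, ← zpow_neg, Nat.cast_succ]
  have hR0 : 0 ≤ R := by nlinarith [pow_nonneg (norm_nonneg (q : ℂ)) n]
  have hq : ‖(q : ℂ)‖ < 1 := by rwa [hnorm]
  have hqc : (q : ℂ) ≠ 0 := Complex.ofReal_ne_zero.2 hq0.ne'
  have hsum : Set.EqOn
      (fun ζ => (∏' j : ℕ, (1 - (q : ℂ) ^ (n + 1) * ζ * (q : ℂ) ^ j)) *
        ∑' m : ℕ, f m / ∏' j : ℕ, (1 - ζ * (q : ℂ) ^ m * (q : ℂ) ^ j))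
      (fun ζ => ∑' m : ℕ, f m * qRatio q n m ζ) (sphere 0 R) := by
    intro ζ hζ
    have hζ' : ∀ k : ℕ, ζ * (q : ℂ) ^ k ≠ 1 :=
      mul_pow_ne_one hq.le hR₁ hR₂ (mem_sphere_zero_iff_norm.1 hζ)
    simp only [← tsum_mul_left, mul_div_left_comm _ (f _), tprod_div_tprod_eq_qRatio hq hζ']
  rw [circleIntegral.integral_congr hR0 hsum, circleIntegral_tsum_mul hR0
      (continuousOn_qRatio hq.le hR₁)
      (fun m ζ hζ => norm_qRatio_le hq hR₁ (mem_sphere_zero_iff_norm.1 hζ) m) hf]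
  simp only [circleIntegral_qRatio hqc hq hR₁, mul_ite, mul_zero, tsum_ite_eq]
  field_simp
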